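/- If ℓ_A(c) = 2 and Red_A(c) is finite, then there exists a c-compatible order of A_c if and only if the Hurwitz action of B₂ on Red_A(c) is transitive. -/

import Mathlib

/-!
A reduced factorization of `c` is `[a, a⁻¹ * c]` with `a` in `S = {a ∈ A | a⁻¹ * c ∈ A}`, and a
Hurwitz move acts on its first letter by the permutation `φ a = a⁻¹ * c`, which preserves `S`
because `A` is conjugation closed. So Hurwitz orbits are the cycles of `φ` on the finite set `S`.
The only element of length 2 below `c` is `c`, so an order is `c`-compatible exactly when a single
`a ∈ S` satisfies `a ≺ φ a`. In any linear order every cycle contains such an `a`, namely the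
preimage of the largest element of the cycle; conversely, if `φ` is transitive on `S`, ordering
`S` by decreasing position along the cycle of some `a₀` leaves `φ⁻¹ a₀` as the only such `a`,
and the generator `1`, when it lies in `A_c`, can be put at the bottom.
-/

variable {G : Type*} [Group G]

/-- `A` generates `G` as a monoid. -/
def GeneratesM (A : Set G) : Prop :=
  ∀ x : G, ∃ l : List G, (∀ a ∈ l, a ∈ A) ∧ l.prod = x

/-- `A` is closed under `G`-conjugation. -/
def ConjClosed (A : Set G) : Prop :=
  ∀ g a : G, a ∈ A → g * a * g⁻¹ ∈ A

/-- The `A`-length of `x`: minimal number of factors from `A` needed to write `x`. -/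
noncomputable def lenA (A : Set G) (x : G) : ℕ :=
  sInf {n : ℕ | ∃ l : List G, (∀ a ∈ l, a ∈ A) ∧ l.prod = x ∧ l.length = n}

/-- The `A`-prefix order. -/
def leA (A : Set G) (x y : G) : Prop :=
  lenA A x + lenA A (x⁻¹ * y) = lenA A y

/-- The set of reduced `A`-factorizations of `x`, as lists. -/
def RedA (A : Set G) (x : G) : Set (List G) :=
  {l : List G | (∀ a ∈ l, a ∈ A) ∧ l.prod = x ∧ l.length = lenA A x}

/-- `A_c`: the generators occurring below `c`. -/
def Ac (A : Set G) (c : G) : Set G := {a : G | a ∈ A ∧ leA A a c}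

/-- A single Hurwitz move on factorizations. -/
def HurwitzMove : List G → List G → Prop := fun l m =>
  ∃ (p s : List G) (a b : G),
    l = p ++ a :: b :: s ∧ m = p ++ b :: (b⁻¹ * a * b) :: s

/-- `r` is a linear order on the set `S`. -/
def IsLinearOrderOn (S : Set G) (r : G → G → Prop) : Prop :=
  (∀ a ∈ S, r a a) ∧
  (∀ a ∈ S, ∀ b ∈ S, r a b → r b a → a = b) ∧
  (∀ a ∈ S, ∀ b ∈ S, ∀ c ∈ S, r a b → r b c → r a c) ∧
  (∀ a ∈ S, ∀ b ∈ S, r a b ∨ r b a)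

/-- `r` is a `c`-compatible order: every length-2 element below `c` has a unique
rising reduced factorization. -/
def CompatibleOrder (A : Set G) (c : G) (r : G → G → Prop) : Prop :=
  ∀ g : G, leA A g c → lenA A g = 2 →
    ∃! l : List G, l ∈ RedA A g ∧ l.Chain' r

/-- Two factorizations correspond to maximal chains differing in exactly one element. -/
def ChainAdj (l m : List G) : Prop :=
  l ≠ m ∧ ∃ (p s : List G) (a b a' b' : G),
    l = p ++ a :: b :: s ∧ m = p ++ a' :: b' :: s ∧ a * b = a' * b'

/-- Covering relation in the graded factorization poset. -/
def CoversA (A : Set G) (x y : G) : Prop := leA A x y ∧ lenA A y = lenA A x + 1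

/-- `F_≺(a; g)`: upper covers of the atom `a` in `P_g` that also cover a strictly
smaller atom. -/
def Fset (A : Set G) (r : G → G → Prop) (a g : G) : Set G :=
  {h : G | CoversA A a h ∧ leA A h g ∧
    ∃ a' ∈ A, a' ≠ a ∧ r a' a ∧ CoversA A a' h}

/-- `P_c` is well-covered with respect to `r`. -/
def WellCovered (A : Set G) (c : G) (r : G → G → Prop) : Prop :=
  ∀ a ∈ A, leA A a c →
    (Fset A r a c = ∅ ↔ ∀ b ∈ A, leA A b c → r a b)

/-- `P_c` is totally well-covered with respect to `r`. -/
def TotallyWellCovered (A : Set G) (c : G) (r : G → G → Prop) : Prop :=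
  ∀ g : G, leA A g c → WellCovered A g r

open Equiv Function

namespace IsLinearOrderOn

variable {α : Type*} {S T : Set α} {r : α → α → Prop}

theorem mono (hr : IsLinearOrderOn S r) (hTS : T ⊆ S) : IsLinearOrderOn T r :=
  ⟨fun a ha => hr.1 a (hTS ha),
    fun a ha b hb => hr.2.1 a (hTS ha) b (hTS hb),
    fun a ha b hb c hc => hr.2.2.1 a (hTS ha) b (hTS hb) c (hTS hc),
    fun a ha b hb => hr.2.2.2 a (hTS ha) b (hTS hb)⟩

theorem insert_bot (hr : IsLinearOrderOn S r) (x : α) :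
    IsLinearOrderOn (insert x S) (fun a b => a = x ∨ (b ≠ x ∧ r a b)) := by
  refine ⟨?_, ?_, ?_, ?_⟩
  · rintro a (rfl | ha)
    · exact Or.inl rfl
    · by_cases hax : a = x
      · exact Or.inl hax
      · exact Or.inr ⟨hax, hr.1 a ha⟩
  · rintro a ha b hb (rfl | ⟨hbx, hab⟩) (hba | ⟨hax, hba⟩)
    · exact hba.symm
    · exact absurd rfl hax
    · exact absurd hba hbx
    · exact hr.2.1 a (ha.resolve_left hax) b (hb.resolve_left hbx) hab hba
  · rintro a ha b hb d hd (hax | ⟨hbx, hab⟩) (hbx' | ⟨hdx, hbd⟩)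
    · exact Or.inl hax
    · exact Or.inl hax
    · exact absurd hbx' hbx
    · by_cases hax : a = x
      · exact Or.inl hax
      · exact Or.inr ⟨hdx, hr.2.2.1 a (ha.resolve_left hax) b (hb.resolve_left hbx) d
          (hd.resolve_left hdx) hab hbd⟩
  · intro a ha b hb
    by_cases hax : a = x
    · exact Or.inl (Or.inl hax)
    by_cases hbx : b = x
    · exact Or.inr (Or.inl hbx)
    exact (hr.2.2.2 a (ha.resolve_left hax) b (hb.resolve_left hbx)).imp
      (fun hab => Or.inr ⟨hbx, hab⟩) (fun hba => Or.inr ⟨hax, hba⟩)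

theorem of_injOn {β : Type*} [LinearOrder β] {g : α → β} (hg : S.InjOn g) :
    IsLinearOrderOn S (fun a b => g a ≤ g b) :=
  ⟨fun _ _ => le_rfl, fun _ ha _ hb hab hba => hg ha hb (le_antisymm hab hba),
    fun _ _ _ _ _ _ => le_trans, fun a _ b _ => le_total (g a) (g b)⟩

theorem exists_max (hr : IsLinearOrderOn S r) (hTS : T ⊆ S) (hT : T.Finite) (hne : T.Nonempty) :
    ∃ m ∈ T, ∀ x ∈ T, r x m := by
  induction T, hT using Set.Finite.induction_on with
  | empty => exact absurd hne Set.not_nonempty_empty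
  | @insert a T _ _ ih =>
    have haS : a ∈ S := hTS (Set.mem_insert a T)
    rcases T.eq_empty_or_nonempty with rfl | hT
    · exact ⟨a, Set.mem_insert a ∅, fun x hx => by simp_all [hr.1 a haS]⟩
    obtain ⟨m, hm, hmax⟩ := ih (fun x hx => hTS (Set.mem_insert_of_mem a hx)) hT
    have hmS : m ∈ S := hTS (Set.mem_insert_of_mem a hm)
    rcases hr.2.2.2 a haS m hmS with ham | hma
    · refine ⟨m, Set.mem_insert_of_mem a hm, ?_⟩
      rintro x (rfl | hx)
      · exact ham
      · exact hmax x hx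
    · refine ⟨a, Set.mem_insert a T, ?_⟩
      rintro x (rfl | hx)
      · exact hr.1 x haS
      · exact hr.2.2.1 x (hTS (Set.mem_insert_of_mem a hx)) m hmS a haS (hmax x hx) hma

end IsLinearOrderOn

namespace Equiv.Perm

variable {α : Type*} {f : Perm α} {S : Set α} {x₀ x y : α}

theorem SameCycle.exists_nat_pow_eq_of_finite (hS : S.Finite) (hf : ∀ x, f x ∈ S ↔ x ∈ S)
    (hx : x ∈ S) (h : f.SameCycle x y) : ∃ n : ℕ, (f ^ n) x = y := by
  have : Finite S := hS
  obtain ⟨i, rfl⟩ := h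
  obtain ⟨n, hn⟩ := SameCycle.exists_nat_pow_eq (f := f.subtypePerm hf) (x := ⟨x, hx⟩)
    (y := (f.subtypePerm hf ^ i) ⟨x, hx⟩) ⟨i, _root_.rfl⟩
  exact ⟨n, by simpa using congrArg Subtype.val hn⟩

/-- Junk value `0` when `y` is not in the forward orbit of `x₀`. -/
noncomputable def orbitIndex (f : Perm α) (x₀ y : α) : ℕ := sInf {n | (f ^ n) x₀ = y}

theorem pow_orbitIndex (h : ∃ n : ℕ, (f ^ n) x₀ = y) : (f ^ orbitIndex f x₀ y) x₀ = y :=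
  Nat.sInf_mem h

theorem orbitIndex_le {n : ℕ} (h : (f ^ n) x₀ = y) : orbitIndex f x₀ y ≤ n :=
  Nat.sInf_le h

theorem orbitIndex_injOn : Set.InjOn (orbitIndex f x₀) {y | ∃ n : ℕ, (f ^ n) x₀ = y} :=
  fun _ hy _ hz h => (pow_orbitIndex hy).symm.trans (h ▸ pow_orbitIndex hz)

theorem orbitIndex_apply (h : ∃ n : ℕ, (f ^ n) x₀ = y) (hy : f y ≠ x₀) :
    orbitIndex f x₀ (f y) = orbitIndex f x₀ y + 1 := by
  have hsucc : (f ^ (orbitIndex f x₀ y + 1)) x₀ = f y := by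
    rw [pow_succ', mul_apply, pow_orbitIndex h]
  refine le_antisymm (orbitIndex_le hsucc) ?_
  obtain ⟨k, hk⟩ : ∃ k, orbitIndex f x₀ (f y) = k + 1 := by
    refine Nat.exists_eq_succ_of_ne_zero fun h0 => hy ?_
    simpa [h0] using (pow_orbitIndex ⟨_, hsucc⟩).symm
  have hk' := pow_orbitIndex (f := f) (x₀ := x₀) ⟨_, hsucc⟩
  rw [hk, pow_succ', mul_apply, f.injective.eq_iff] at hk'
  exact hk ▸ Nat.succ_le_succ (orbitIndex_le hk')

end Equiv.Perm

section CyclicAscents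

open Equiv.Perm

variable {α : Type*} {S : Set α} {f : Perm α}

theorem IsLinearOrderOn.exists_sameCycle_rel_apply {r : α → α → Prop}
    (hr : IsLinearOrderOn S r) (hS : S.Finite) (hf : ∀ x, f x ∈ S ↔ x ∈ S) {x : α} (hx : x ∈ S) :
    ∃ y ∈ S, f.SameCycle x y ∧ r y (f y) := by
  obtain ⟨m, ⟨hmS, hxm⟩, hmax⟩ := hr.exists_max (T := {y | y ∈ S ∧ f.SameCycle x y})
    (fun _ hy => hy.1) (hS.subset fun _ hy => hy.1) ⟨x, hx, .rfl⟩
  have hm' : f.symm m ∈ S := (hf _).1 (by simpa using hmS)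
  exact ⟨f.symm m, hm', hxm.symm_apply_right, by simpa using hmax _ ⟨hm', hxm.symm_apply_right⟩⟩

theorem exists_isLinearOrderOn_existsUnique_rel_apply (hS : S.Finite)
    (hf : ∀ x, f x ∈ S ↔ x ∈ S) {x₀ : α} (hx₀ : x₀ ∈ S) (hcyc : ∀ y ∈ S, f.SameCycle x₀ y) :
    ∃ r : α → α → Prop, IsLinearOrderOn S r ∧ ∃! y, y ∈ S ∧ r y (f y) := by
  have hreach : ∀ y ∈ S, ∃ n : ℕ, (f ^ n) x₀ = y :=
    fun y hy => (hcyc y hy).exists_nat_pow_eq_of_finite hS hf hx₀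
  have hascent : ∀ y ∈ S, orbitIndex f x₀ (f y) ≤ orbitIndex f x₀ y ↔ f y = x₀ := by
    intro y hy
    by_cases hy' : f y = x₀
    · have h0 : orbitIndex f x₀ x₀ = 0 := Nat.le_zero.1 (orbitIndex_le (n := 0) (by simp))
      simp [hy', h0]
    · simp [orbitIndex_apply (hreach y hy) hy', hy']
  refine ⟨fun a b => OrderDual.toDual (orbitIndex f x₀ a) ≤ OrderDual.toDual (orbitIndex f x₀ b),
    IsLinearOrderOn.of_injOn (orbitIndex_injOn.mono hreach), f.symm x₀, ?_, ?_⟩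
  · have hS' : f.symm x₀ ∈ S := (hf _).1 (by simpa using hx₀)
    exact ⟨hS', OrderDual.toDual_le_toDual.2 ((hascent _ hS').2 (by simp))⟩
  · rintro y ⟨hy, hyr⟩
    exact f.eq_symm_apply.2 ((hascent y hy).1 (OrderDual.toDual_le_toDual.1 hyr))

theorem exists_isLinearOrderOn_existsUnique_rel_apply_iff (hS : S.Finite)
    (hf : ∀ x, f x ∈ S ↔ x ∈ S) :
    (∃ r : α → α → Prop, IsLinearOrderOn S r ∧ ∃! y, y ∈ S ∧ r y (f y)) ↔
      S.Nonempty ∧ ∀ x ∈ S, ∀ y ∈ S, f.SameCycle x y := by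
  constructor
  · rintro ⟨r, hr, y₀, ⟨hy₀, -⟩, huniq⟩
    refine ⟨⟨y₀, hy₀⟩, fun x hx y hy => ?_⟩
    obtain ⟨x', hx', hxx', hrx⟩ := hr.exists_sameCycle_rel_apply hS hf hx
    obtain ⟨y', hy', hyy', hry⟩ := hr.exists_sameCycle_rel_apply hS hf hy
    have hx'y' : x' = y' := (huniq x' ⟨hx', hrx⟩).trans (huniq y' ⟨hy', hry⟩).symm
    exact hxx'.trans (hx'y' ▸ hyy'.symm)
  · rintro ⟨⟨x₀, hx₀⟩, hcyc⟩
    exact exists_isLinearOrderOn_existsUnique_rel_apply hS hf hx₀ (hcyc x₀ hx₀)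

end CyclicAscents

section Length

variable {A : Set G}

theorem lenA_le_length {l : List G} (hl : ∀ a ∈ l, a ∈ A) : lenA A l.prod ≤ l.length :=
  Nat.sInf_le ⟨l, hl, rfl, rfl⟩

theorem lenA_one : lenA A 1 = 0 :=
  Nat.le_zero.1 (by simpa using lenA_le_length (A := A) (l := []) (by simp))

theorem lenA_le_one_of_mem {a : G} (ha : a ∈ A) : lenA A a ≤ 1 := by
  simpa using lenA_le_length (l := [a]) (by simpa using ha)

theorem RedA_nonempty (hgen : GeneratesM A) (x : G) : (RedA A x).Nonempty := by
  obtain ⟨l, hl, rfl⟩ := hgen x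
  have hne : {n | ∃ m : List G, (∀ a ∈ m, a ∈ A) ∧ m.prod = l.prod ∧ m.length = n}.Nonempty :=
    ⟨l.length, l, hl, rfl, rfl⟩
  exact Nat.sInf_mem hne

theorem lenA_eq_zero_iff (hgen : GeneratesM A) {x : G} : lenA A x = 0 ↔ x = 1 := by
  refine ⟨fun h => ?_, fun h => h ▸ lenA_one⟩
  obtain ⟨l, -, hprod, hlen⟩ := RedA_nonempty hgen x
  rw [h, List.length_eq_zero_iff] at hlen
  simpa [hlen] using hprod.symm

theorem lenA_eq_one_iff (hgen : GeneratesM A) {x : G} : lenA A x = 1 ↔ x ∈ A ∧ x ≠ 1 := by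
  refine ⟨fun h => ?_, fun ⟨hx, hx1⟩ => ?_⟩
  · obtain ⟨l, hl, hprod, hlen⟩ := RedA_nonempty hgen x
    rw [h, List.length_eq_one_iff] at hlen
    obtain ⟨a, rfl⟩ := hlen
    obtain rfl : a = x := by simpa using hprod
    refine ⟨hl a (List.mem_singleton_self a), fun hx1 => ?_⟩
    simp [(lenA_eq_zero_iff hgen).2 hx1] at h
  · have := lenA_le_one_of_mem hx
    have := mt (lenA_eq_zero_iff hgen).1 hx1
    omega

theorem eq_of_leA_of_lenA_eq (hgen : GeneratesM A) {g c : G} (hle : leA A g c)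
    (hlen : lenA A g = lenA A c) : g = c := by
  have : lenA A (g⁻¹ * c) = 0 := by unfold leA at hle; omega
  exact inv_mul_eq_one.1 ((lenA_eq_zero_iff hgen).1 this)

end Length

theorem ConjClosed.conj_mem_iff {A : Set G} (hconj : ConjClosed A) (g a : G) :
    g * a * g⁻¹ ∈ A ↔ a ∈ A :=
  ⟨fun h => by simpa [mul_assoc] using hconj g⁻¹ _ h, hconj g a⟩

def firstFactors (A : Set G) (c : G) : Set G := {a | a ∈ A ∧ a⁻¹ * c ∈ A}

/-- A Hurwitz move sends `[a, a⁻¹ * c]` to `[a⁻¹ * c, (a⁻¹ * c)⁻¹ * c]`, so on first letters it is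
`a ↦ a⁻¹ * c`. -/
def hurwitzPerm (c : G) : Perm G := (Equiv.inv G).trans (Equiv.mulRight c)

@[simp]
theorem hurwitzPerm_apply (c a : G) : hurwitzPerm c a = a⁻¹ * c := rfl

section TwoLetterFactorizations

variable {A : Set G} {c : G}

theorem hurwitzPerm_mem_firstFactors_iff (hconj : ConjClosed A) (a : G) :
    hurwitzPerm c a ∈ firstFactors A c ↔ a ∈ firstFactors A c := by
  have : (a⁻¹ * c)⁻¹ * c = c⁻¹ * a * c⁻¹⁻¹ := by group
  simp only [firstFactors, Set.mem_ofPred_eq, hurwitzPerm_apply, this, hconj.conj_mem_iff,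
    and_comm]

theorem notMem_of_lenA_eq_two (h2 : lenA A c = 2) : c ∉ A :=
  fun hc => by have := lenA_le_one_of_mem hc; omega

theorem one_notMem_firstFactors (h2 : lenA A c = 2) : (1 : G) ∉ firstFactors A c :=
  fun h => notMem_of_lenA_eq_two h2 (by simpa using h.2)

theorem firstFactors_subset_Ac (hgen : GeneratesM A) (h2 : lenA A c = 2) :
    firstFactors A c ⊆ Ac A c := by
  rintro a ⟨ha, hac⟩
  have hc := notMem_of_lenA_eq_two h2
  have ha1 : a ≠ 1 := by rintro rfl; simp_all
  have hac1 : a⁻¹ * c ≠ 1 := fun h => hc (inv_mul_eq_one.1 h ▸ ha)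
  refine ⟨ha, ?_⟩
  unfold leA
  rw [(lenA_eq_one_iff hgen).2 ⟨ha, ha1⟩, (lenA_eq_one_iff hgen).2 ⟨hac, hac1⟩, h2]

theorem Ac_subset_insert_one_firstFactors (hgen : GeneratesM A) (h2 : lenA A c = 2) :
    Ac A c ⊆ insert 1 (firstFactors A c) := by
  rintro a ⟨ha, hle⟩
  by_cases ha1 : a = 1
  · exact Or.inl ha1
  have h1 := (lenA_eq_one_iff hgen).2 ⟨ha, ha1⟩
  have hac : lenA A (a⁻¹ * c) = 1 := by unfold leA at hle; omega
  exact Or.inr ⟨ha, ((lenA_eq_one_iff hgen).1 hac).1⟩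

theorem RedA_eq_image (h2 : lenA A c = 2) :
    RedA A c = (fun a => [a, a⁻¹ * c]) '' firstFactors A c := by
  ext l
  constructor
  · rintro ⟨hl, hprod, hlen⟩
    rw [h2, List.length_eq_two] at hlen
    obtain ⟨a, b, rfl⟩ := hlen
    obtain rfl : b = a⁻¹ * c := eq_inv_mul_of_mul_eq (by simpa using hprod)
    exact ⟨a, ⟨hl a (by simp), hl _ (by simp)⟩, rfl⟩
  · rintro ⟨a, ⟨ha, hac⟩, rfl⟩
    exact ⟨by simp [ha, hac], by simp, by simp [h2]⟩

theorem pair_injective (c : G) : Injective (fun a : G => [a, a⁻¹ * c]) :=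
  fun _ _ h => List.head_eq_of_cons_eq h

theorem compatibleOrder_iff (hgen : GeneratesM A) (h2 : lenA A c = 2) {r : G → G → Prop} :
    CompatibleOrder A c r ↔ ∃! a, a ∈ firstFactors A c ∧ r a (hurwitzPerm c a) := by
  have hc : CompatibleOrder A c r ↔ ∃! l, l ∈ RedA A c ∧ l.IsChain r :=
    ⟨fun h => h c (by simp [leA, lenA_one]) h2,
      fun h g hle hg => eq_of_leA_of_lenA_eq hgen hle (hg.trans h2.symm) ▸ h⟩
  rw [hc, RedA_eq_image h2]
  constructor
  · rintro ⟨_, ⟨⟨a, ha, rfl⟩, hr⟩, huniq⟩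
    exact ⟨a, ⟨ha, List.isChain_pair.1 hr⟩,
      fun b hb => pair_injective c (huniq _ ⟨⟨b, hb.1, rfl⟩, List.isChain_pair.2 hb.2⟩)⟩
  · rintro ⟨a, ⟨ha, hr⟩, huniq⟩
    refine ⟨_, ⟨⟨a, ha, rfl⟩, List.isChain_pair.2 hr⟩, ?_⟩
    rintro _ ⟨⟨b, hb, rfl⟩, hbr⟩
    rw [huniq b ⟨hb, List.isChain_pair.1 hbr⟩]

end TwoLetterFactorizations

section Hurwitz

open Relation

variable {l m : List G}

theorem HurwitzMove.length_eq (h : HurwitzMove l m) : m.length = l.length := by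
  obtain ⟨p, s, a, b, rfl, rfl⟩ := h
  simp

theorem HurwitzMove.prod_eq (h : HurwitzMove l m) : m.prod = l.prod := by
  obtain ⟨p, s, a, b, rfl, rfl⟩ := h
  simp [mul_assoc]

theorem HurwitzMove.sameCycle_head (h : HurwitzMove l m) (hl : l.length = 2) :
    (hurwitzPerm l.prod).SameCycle (l.headD 1) (m.headD 1) := by
  obtain ⟨p, s, a, b, rfl, rfl⟩ := h
  obtain ⟨rfl, rfl⟩ : p = [] ∧ s = [] := by
    simp only [List.length_append, List.length_cons] at hl
    exact ⟨List.eq_nil_of_length_eq_zero (by omega), List.eq_nil_of_length_eq_zero (by omega)⟩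
  exact ⟨1, by simp⟩

theorem hurwitzMove_pair (c a : G) :
    HurwitzMove [a, a⁻¹ * c] [hurwitzPerm c a, (hurwitzPerm c a)⁻¹ * c] :=
  ⟨[], [], a, a⁻¹ * c, rfl, by simp only [hurwitzPerm_apply, List.nil_append]; group⟩

theorem Relation.EqvGen.hurwitzMove_invariant (h : EqvGen HurwitzMove l m) :
    m.length = l.length ∧ m.prod = l.prod ∧
      (l.length = 2 → (hurwitzPerm l.prod).SameCycle (l.headD 1) (m.headD 1)) := by
  induction h with
  | rel l m h => exact ⟨h.length_eq, h.prod_eq, h.sameCycle_head⟩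
  | refl l => exact ⟨rfl, rfl, fun _ => .rfl⟩
  | symm l m _ ih =>
    obtain ⟨hlen, hprod, hcyc⟩ := ih
    exact ⟨hlen.symm, hprod.symm, fun hm => hprod ▸ (hcyc (hlen ▸ hm)).symm⟩
  | trans l m n _ _ ih₁ ih₂ =>
    obtain ⟨hlen₁, hprod₁, hcyc₁⟩ := ih₁
    obtain ⟨hlen₂, hprod₂, hcyc₂⟩ := ih₂
    exact ⟨hlen₂.trans hlen₁, hprod₂.trans hprod₁,
      fun hl => (hcyc₁ hl).trans (hprod₁ ▸ hcyc₂ (hlen₁ ▸ hl))⟩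

theorem eqvGen_hurwitzMove_pair_iff {c x y : G} :
    EqvGen HurwitzMove [x, x⁻¹ * c] [y, y⁻¹ * c] ↔ (hurwitzPerm c).SameCycle x y := by
  constructor
  · intro h
    simpa using h.hurwitzMove_invariant.2.2 rfl
  · rintro ⟨i, rfl⟩
    induction i using Int.induction_on with
    | zero => exact EqvGen.refl _
    | succ i ih =>
      rw [add_comm, zpow_add, zpow_one, Perm.mul_apply]
      exact ih.trans _ _ _ (EqvGen.rel _ _ (hurwitzMove_pair c _))
    | pred i ih =>
      have hmove := hurwitzMove_pair c ((hurwitzPerm c ^ (-(i : ℤ) - 1)) x)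
      rw [← Perm.mul_apply, ← zpow_one_add, add_sub_cancel] at hmove
      exact ih.trans _ _ _ (EqvGen.symm _ _ (EqvGen.rel _ _ hmove))

end Hurwitz

theorem compatible_iff_hurwitz_transitive_rank_two (A : Set G)
    (hgen : GeneratesM A) (hconj : ConjClosed A) (c : G)
    (h2 : lenA A c = 2) (hfin : (RedA A c).Finite) :
    (∃ r : G → G → Prop, IsLinearOrderOn (Ac A c) r ∧ CompatibleOrder A c r) ↔
      (∀ l ∈ RedA A c, ∀ m ∈ RedA A c, Relation.EqvGen HurwitzMove l m) := by
  have hS : (firstFactors A c).Finite :=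
    Set.Finite.of_finite_image (RedA_eq_image h2 ▸ hfin) (pair_injective c).injOn
  have hf := hurwitzPerm_mem_firstFactors_iff (c := c) hconj
  simp only [RedA_eq_image h2, Set.forall_mem_image, eqvGen_hurwitzMove_pair_iff]
  have hne : (firstFactors A c).Nonempty := (RedA_eq_image h2 ▸ RedA_nonempty hgen c).of_image
  refine Iff.trans ?_ ((exists_isLinearOrderOn_existsUnique_rel_apply_iff hS hf).trans
    (and_iff_right hne))
  constructor
  · rintro ⟨r, hr, hcomp⟩
    exact ⟨r, hr.mono (firstFactors_subset_Ac hgen h2), (compatibleOrder_iff hgen h2).1 hcomp⟩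
  · rintro ⟨r, hr, huniq⟩
    refine ⟨_, (hr.insert_bot 1).mono (Ac_subset_insert_one_firstFactors hgen h2),
      (compatibleOrder_iff hgen h2).2 ((existsUnique_congr fun a => ?_).1 huniq)⟩
    refine and_congr_right fun ha => ?_
    have h1 := one_notMem_firstFactors h2
    have hφa : a⁻¹ * c ≠ 1 := ne_of_mem_of_not_mem ((hf a).2 ha) h1
    simp [ne_of_mem_of_not_mem ha h1, hφa]
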